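/- For every ρ > 0 there exists a constant D > 0, depending only on d, ρ, ‖C‖ and |𝒳| (in particular not on n or μ), such that for all n ∈ ℕ: E_ℙ[ max_{z∈B_ρ} |M_μ(Cᵀz) − M_n(Cᵀz, ·)| ] ≤ D/√n (the integrand being ℙ-measurable). -/

import Mathlib

open MeasureTheory Filter Topology Metric ProbabilityTheory
open scoped RealInnerProductSpace Pointwise

noncomputable section

abbrev Euc (k : ℕ) : Type := EuclideanSpace ℝ (Fin k)

/-- Moment generating function of a measure on `Euc k`. -/
def Mgf {k : ℕ} (μ : Measure (Euc k)) (y : Euc k) : ℝ :=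
  ∫ x, Real.exp ⟪y, x⟫ ∂μ

/-- Log-moment generating function. -/
def Lmgf {k : ℕ} (μ : Measure (Euc k)) (y : Euc k) : ℝ :=
  Real.log (Mgf μ y)

/-- MEM function: Fenchel conjugate of the log-moment generating function. -/
def Kappa {k : ℕ} (μ : Measure (Euc k)) (x : Euc k) : EReal :=
  ⨆ y : Euc k, ((⟪y, x⟫ - Lmgf μ y : ℝ) : EReal)

/-- Fenchel conjugate of an extended-real-valued function. -/
def EConj {k : ℕ} (g : Euc k → EReal) (w : Euc k) : EReal :=
  ⨆ z : Euc k, (((⟪z, w⟫ : ℝ) : EReal) - g z)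

/-- Properness for extended-real-valued functions. -/
def EProper {k : ℕ} (g : Euc k → EReal) : Prop :=
  (∀ z, g z ≠ ⊥) ∧ (∃ z, g z ≠ ⊤)

/-- Convexity for extended-real-valued functions. -/
def EConvex {k : ℕ} (g : Euc k → EReal) : Prop :=
  ∀ x y : Euc k, ∀ a b : ℝ, 0 ≤ a → 0 ≤ b → a + b = 1 →
    g (a • x + b • y) ≤ (a : EReal) * g x + (b : EReal) * g y

/-- Epigraphical convergence of a sequence of extended-real-valued functions. -/
def EpiConverges {F : Type*} [TopologicalSpace F] (f : ℕ → F → EReal) (g : F → EReal) : Prop :=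
  (∀ z : F, ∀ zs : ℕ → F, Tendsto zs atTop (𝓝 z) →
      g z ≤ Filter.liminf (fun n => f n (zs n)) atTop) ∧
  (∀ z : F, ∃ zs : ℕ → F, Tendsto zs atTop (𝓝 z) ∧
      Filter.limsup (fun n => f n (zs n)) atTop ≤ g z)

variable {d m : ℕ}

/-- Primal MEM objective `x ↦ α g(Cx) + κ_μ(x)`. -/
def PrimalObj (α : ℝ) (g : Euc m → EReal) (C : Euc d →L[ℝ] Euc m)
    (μ : Measure (Euc d)) (x : Euc d) : EReal :=
  (α : EReal) * g (C x) + Kappa μ x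

/-- Dual MEM objective `z ↦ α g*(-z/α) + L_μ(Cᵀ z)` for general fidelity. -/
def DualObj (α : ℝ) (g : Euc m → EReal) (C : Euc d →L[ℝ] Euc m)
    (μ : Measure (Euc d)) (z : Euc m) : EReal :=
  (α : EReal) * EConj g (-(α⁻¹ • z)) +
    ((Lmgf μ (ContinuousLinearMap.adjoint C z) : ℝ) : EReal)

/-- Dual MEM objective with quadratic fidelity. -/
def QDual (α : ℝ) (b : Euc m) (C : Euc d →L[ℝ] Euc m)
    (μ : Measure (Euc d)) (z : Euc m) : ℝ :=
  ‖z‖ ^ 2 / (2 * α) - ⟪b, z⟫ + Lmgf μ (ContinuousLinearMap.adjoint C z)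

/-- Empirical moment generating function from samples. -/
def EmpMgf {Ω : Type*} (X : ℕ → Ω → Euc d) (n : ℕ) (ω : Ω) (y : Euc d) : ℝ :=
  (n : ℝ)⁻¹ * ∑ i ∈ Finset.range n, Real.exp ⟪y, X i ω⟫

/-- Empirical log-moment generating function. -/
def EmpLmgf {Ω : Type*} (X : ℕ → Ω → Euc d) (n : ℕ) (ω : Ω) (y : Euc d) : ℝ :=
  Real.log (EmpMgf X n ω y)

/-- Empirical dual objective, general fidelity. -/
def DualObjEmp {Ω : Type*} (α : ℝ) (g : Euc m → EReal) (C : Euc d →L[ℝ] Euc m)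
    (X : ℕ → Ω → Euc d) (n : ℕ) (ω : Ω) (z : Euc m) : EReal :=
  (α : EReal) * EConj g (-(α⁻¹ • z)) +
    ((EmpLmgf X n ω (ContinuousLinearMap.adjoint C z) : ℝ) : EReal)

/-- Empirical dual objective with quadratic fidelity. -/
def QDualEmp {Ω : Type*} (α : ℝ) (b : Euc m) (C : Euc d →L[ℝ] Euc m)
    (X : ℕ → Ω → Euc d) (n : ℕ) (ω : Ω) (z : Euc m) : ℝ :=
  ‖z‖ ^ 2 / (2 * α) - ⟪b, z⟫ + EmpLmgf X n ω (ContinuousLinearMap.adjoint C z)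

/-- `|𝒳| = max_{x ∈ 𝒳} ‖x‖`. -/
def XBound (Xs : Set (Euc d)) : ℝ := sSup ((fun x => ‖x‖) '' Xs)

/-- The constant `ρ̂`. -/
def rhoHat (α : ℝ) (b : Euc m) (C : Euc d →L[ℝ] Euc m) (Xs : Set (Euc d)) : ℝ :=
  2 * α * (‖b‖ + ‖C‖ * XBound Xs)

/-- The constant `ρ₀`. -/
def rho0 (α : ℝ) (b : Euc m) (C : Euc d →L[ℝ] Euc m) (Xs : Set (Euc d)) : ℝ :=
  max (rhoHat α b C Xs)
    ((rhoHat α b C Xs) ^ 2 / (2 * α) + ‖b‖ * rhoHat α b C Xs +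
      rhoHat α b C Xs * ‖C‖ * XBound Xs)

/-- `D_ρ(ν,μ) = max_{z ∈ B_ρ} |L_μ(Cᵀz) − L_ν(Cᵀz)|`. -/
def Drho (ρ : ℝ) (C : Euc d →L[ℝ] Euc m) (ν μ : Measure (Euc d)) : ℝ :=
  sSup ((fun z => |Lmgf μ (ContinuousLinearMap.adjoint C z) -
      Lmgf ν (ContinuousLinearMap.adjoint C z)|) '' Metric.closedBall (0 : Euc m) ρ)

/-- Smallest singular value of `C`. -/
def sigmaMin (C : Euc d →L[ℝ] Euc m) : ℝ :=
  ⨅ x : Metric.sphere (0 : Euc d) 1, ‖C x.val‖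

/-- The set of `ε`-minimizers of the quadratic-fidelity dual objective. -/
def SEps (α : ℝ) (b : Euc m) (C : Euc d →L[ℝ] Euc m) (ν : Measure (Euc d)) (ε : ℝ) :
    Set (Euc m) :=
  {z | ∀ w, QDual α b C ν z ≤ QDual α b C ν w + ε}

/-!
Expanding `exp ⟪z, y⟫` in its power series and `⟪z, y⟫ ^ k` in the coordinate monomials
`∏ i, y (p i)` (`p : Fin k → Fin m`) bounds `|M_ν z - M_n z|` on the ball `‖z‖ ≤ ρ` by the
`z`-free series `∑ₖ ρᵏ / k! ∑ₚ |∫ ∏ y (pᵢ) dν - ∫ ∏ y (pᵢ) dνₙ|`, where `νₙ` is the empirical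
measure of the sample. Each moment discrepancy is the deviation of an empirical mean of i.i.d.
variables bounded by `Rᵏ`, so its expectation is at most `Rᵏ / √n` by the variance of a sum of
independent variables; summing the series gives `exp (ρ m R) / √n`. The theorem is the case
`ν = C_* μ` with the sample `C Xᵢ` and `R = ‖C‖ B` for a bound `B` of `𝒳`, since
`M_μ (Cᵀ z) = M_{C_* μ} z`.
-/

theorem inner_pow_eq_sum_prod (z y : Euc m) (k : ℕ) :
    ⟪z, y⟫ ^ k = ∑ p : Fin k → Fin m, (∏ i, z (p i)) * ∏ i, y (p i) := by
  simp only [PiLp.inner_apply, RCLike.inner_apply, conj_trivial, ← Fin.prod_const,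
    Finset.prod_univ_sum, Fintype.piFinset_univ, ← Finset.prod_mul_distrib, mul_comm]

theorem abs_prod_apply_le_pow {k : ℕ} {y : Euc m} {R : ℝ} (hy : ‖y‖ ≤ R) (p : Fin k → Fin m) :
    |∏ i, y (p i)| ≤ R ^ k := by
  rw [Finset.abs_prod, ← Fin.prod_const]
  exact Finset.prod_le_prod (fun _ _ => abs_nonneg _) fun i _ =>
    (PiLp.norm_apply_le y (p i)).trans hy

theorem Continuous.integrable_of_ae_norm_le {E : Type*} [NormedAddCommGroup E] [ProperSpace E]
    [MeasurableSpace E] [OpensMeasurableSpace E] {μ : Measure E} [IsFiniteMeasure μ] {R : ℝ}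
    (hμ : ∀ᵐ y ∂μ, ‖y‖ ≤ R) {f : E → ℝ} (hf : Continuous f) : Integrable f μ := by
  obtain ⟨K, hK⟩ := (isCompact_closedBall (0 : E) R).exists_bound_of_continuousOn hf.continuousOn
  exact Integrable.of_bound hf.aestronglyMeasurable K
    (hμ.mono fun y hy => hK y (mem_closedBall_zero_iff.2 hy))

theorem ae_norm_le_of_map_eq {Ω E : Type*} [MeasurableSpace Ω] [NormedAddCommGroup E]
    [MeasurableSpace E] [OpensMeasurableSpace E] {P : Measure Ω} {ν : Measure E} {Y : Ω → E}
    (hY : AEMeasurable Y P) (hlaw : P.map Y = ν) {R : ℝ} (hYR : ∀ ω, ‖Y ω‖ ≤ R) :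
    ∀ᵐ y ∂ν, ‖y‖ ≤ R :=
  hlaw ▸ (ae_map_iff hY (isClosed_le continuous_norm continuous_const).measurableSet).2
    (ae_of_all _ hYR)

theorem integral_le_tsum_integral_of_le_tsum {Ω : Type*} [MeasurableSpace Ω] {P : Measure Ω}
    {f : Ω → ℝ} {g : ℕ → Ω → ℝ} (hf : AEStronglyMeasurable f P) (hf0 : ∀ ω, 0 ≤ f ω)
    (hg0 : ∀ k ω, 0 ≤ g k ω) (hg : ∀ k, Integrable (g k) P)
    (hsum : Summable fun k => ∫ ω, g k ω ∂P) (hfg : ∀ ω, f ω ≤ ∑' k, g k ω) :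
    ∫ ω, f ω ∂P ≤ ∑' k, ∫ ω, g k ω ∂P := by
  rw [integral_eq_lintegral_of_nonneg_ae (ae_of_all _ hf0) hf]
  refine ENNReal.toReal_le_of_le_ofReal (tsum_nonneg fun k => integral_nonneg (hg0 k)) ?_
  calc ∫⁻ ω, ENNReal.ofReal (f ω) ∂P ≤ ∫⁻ ω, ∑' k, ENNReal.ofReal (g k ω) ∂P := by
        refine lintegral_mono fun ω => (ENNReal.ofReal_le_ofReal (hfg ω)).trans ?_
        by_cases h : Summable (g · ω)
        · rw [ENNReal.ofReal_tsum_of_nonneg (hg0 · ω) h]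
        · simp [tsum_eq_zero_of_not_summable h]
    _ = ∑' k, ENNReal.ofReal (∫ ω, g k ω ∂P) := by
        rw [lintegral_tsum fun k => (hg k).aemeasurable.ennreal_ofReal]
        congr 1 with k
        exact (ofReal_integral_eq_lintegral_ofReal (hg k) (ae_of_all _ (hg0 k))).symm
    _ = ENNReal.ofReal (∑' k, ∫ ω, g k ω ∂P) :=
        (ENNReal.ofReal_tsum_of_nonneg (fun k => integral_nonneg (hg0 k)) hsum).symm

theorem measurable_sSup_image_of_continuousOn {Ω E : Type*} [MeasurableSpace Ω]
    [TopologicalSpace E] [SecondCountableTopology E] {s : Set E} {g : E → Ω → ℝ}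
    (hcont : ∀ ω, ContinuousOn (g · ω) s) (hmeas : ∀ z, Measurable (g z)) :
    Measurable fun ω => sSup ((g · ω) '' s) := by
  obtain ⟨S, hSc, hSd⟩ := TopologicalSpace.exists_countable_dense s
  have : Countable S := hSc.to_subtype
  have h : ∀ ω, sSup ((g · ω) '' s) = ⨆ z : S, g z ω := fun ω => by
    rw [sSup_image']
    exact (hSd.ciSup' (hcont ω).domRestrict).symm
  simp_rw [h]
  exact Measurable.iSup fun z => hmeas z

theorem sq_integral_abs_sub_integral_le_variance {Ω : Type*} [MeasurableSpace Ω] {P : Measure Ω}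
    [IsProbabilityMeasure P] {X : Ω → ℝ} (hX : MemLp X 2 P) :
    (∫ ω, |X ω - P[X]| ∂P) ^ 2 ≤ Var[X; P] := by
  have h := variance_nonneg (fun ω => |X ω - P[X]|) P
  rw [variance_eq_sub (show MemLp (fun ω => |X ω - P[X]|) 2 P from
    (hX.sub (memLp_const _)).abs)] at h
  rw [variance_eq_integral hX.aemeasurable]
  simpa [sq_abs] using h

theorem integral_abs_sub_average_le {Ω : Type*} [MeasurableSpace Ω] {P : Measure Ω}
    [IsProbabilityMeasure P] {W : ℕ → Ω → ℝ} (hW : ∀ j, AEStronglyMeasurable (W j) P)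
    (hind : Pairwise fun i j => IndepFun (W i) (W j) P) {K c : ℝ} (hK : 0 ≤ K)
    (hWK : ∀ j ω, |W j ω| ≤ K) (hmean : ∀ j, ∫ ω, W j ω ∂P = c) {n : ℕ} (hn : 0 < n) :
    ∫ ω, |c - (n : ℝ)⁻¹ * ∑ j ∈ Finset.range n, W j ω| ∂P ≤ K / Real.sqrt n := by
  have hWK' : ∀ j, ∀ᵐ ω ∂P, W j ω ∈ Set.Icc (-K) K := fun j =>
    ae_of_all _ fun ω => abs_le.1 (hWK j ω)
  have hWL2 : ∀ j, MemLp (W j) 2 P := fun j => memLp_of_bounded (hWK' j) (hW j) 2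
  set A : Ω → ℝ := fun ω => (n : ℝ)⁻¹ * ∑ j ∈ Finset.range n, W j ω
  have hAL2 : MemLp A 2 P := by
    simpa [A] using (memLp_finsetSum' (Finset.range n) fun j _ => hWL2 j).const_mul (n : ℝ)⁻¹
  have hAmean : P[A] = c := by
    simp [A, integral_const_mul, integral_finsetSum _ fun j _ => (hWL2 j).integrable one_le_two,
      hmean]
    field_simp
  have hAvar : Var[A; P] ≤ K ^ 2 / n := by
    have hsum := IndepFun.variance_sum (s := Finset.range n) (fun j _ => hWL2 j)
      fun i _ j _ hij => hind hij
    have hle : ∀ j ∈ Finset.range n, Var[W j; P] ≤ K ^ 2 := fun j _ => by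
      simpa using variance_le_sq_of_bounded (hWK' j) (hW j).aemeasurable
    calc Var[A; P] = ((n : ℝ)⁻¹) ^ 2 * Var[∑ j ∈ Finset.range n, W j; P] := by
          rw [← variance_const_mul]; congr; ext ω; simp [A]
      _ ≤ ((n : ℝ)⁻¹) ^ 2 * (n * K ^ 2) := by
          rw [hsum]; gcongr; simpa using Finset.sum_le_sum hle
      _ = K ^ 2 / n := by field_simp
  have h := (sq_integral_abs_sub_integral_le_variance hAL2).trans hAvar
  rw [hAmean] at h
  simp_rw [abs_sub_comm c]
  calc ∫ ω, |A ω - c| ∂P ≤ Real.sqrt (K ^ 2 / n) := Real.le_sqrt_of_sq_le h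
    _ = K / Real.sqrt n := by rw [Real.sqrt_div' _ (Nat.cast_nonneg n), Real.sqrt_sq hK]

section Empirical

variable {E : Type*} [MeasurableSpace E] (x : ℕ → E) (n : ℕ)

def empiricalMeasure : Measure E :=
  (n : ENNReal)⁻¹ • ∑ j ∈ Finset.range n, Measure.dirac (x j)

theorem integral_empiricalMeasure [MeasurableSingletonClass E] (f : E → ℝ) :
    ∫ y, f y ∂empiricalMeasure x n = (n : ℝ)⁻¹ * ∑ j ∈ Finset.range n, f (x j) := by
  simp [empiricalMeasure, integral_smul_measure,
    integral_finsetSum_measure fun j _ => integrable_dirac (by simp)]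

theorem isProbabilityMeasure_empiricalMeasure {n : ℕ} (hn : 0 < n) :
    IsProbabilityMeasure (empiricalMeasure x n) := by
  constructor
  simp [empiricalMeasure,
    ENNReal.inv_mul_cancel (Nat.cast_ne_zero.2 hn.ne') (ENNReal.natCast_ne_top n)]

theorem ae_empiricalMeasure [MeasurableSingletonClass E] {q : E → Prop} (hq : ∀ j, q (x j)) :
    ∀ᵐ y ∂empiricalMeasure x n, q y := by
  simp [ae_iff, empiricalMeasure, Measure.dirac_apply, hq]

end Empirical

section IidSample

variable {Ω E : Type*} [MeasurableSpace Ω] [MeasurableSpace E] [MeasurableSingletonClass E]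
  {P : Measure Ω} {ν : Measure E} {Y : ℕ → Ω → E} {f : E → ℝ} {K : ℝ} {n : ℕ}

theorem integrable_abs_integral_sub_integral_empiricalMeasure [IsFiniteMeasure P]
    (hY : ∀ j, Measurable (Y j)) (hf : Measurable f) (hfK : ∀ j ω, |f (Y j ω)| ≤ K)
    (hn : 0 < n) :
    Integrable (fun ω => |∫ y, f y ∂ν - ∫ y, f y ∂empiricalMeasure (Y · ω) n|) P := by
  refine Integrable.of_bound ?_ (|∫ y, f y ∂ν| + K) (ae_of_all _ fun ω => ?_)
  · simp_rw [integral_empiricalMeasure]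
    exact (measurable_const.sub ((Finset.measurable_sum _ fun j _ =>
      hf.comp (hY j)).const_mul _)).abs.aestronglyMeasurable
  have := isProbabilityMeasure_empiricalMeasure (Y · ω) hn
  have hK := norm_integral_le_of_norm_le_const (μ := empiricalMeasure (Y · ω) n)
    (ae_empiricalMeasure _ _ (q := fun y => ‖f y‖ ≤ K) fun j => hfK j ω)
  rw [probReal_univ, mul_one] at hK
  rw [Real.norm_eq_abs, abs_abs]
  exact (abs_sub _ _).trans (add_le_add le_rfl hK)

theorem integral_abs_integral_sub_integral_empiricalMeasure_le [IsProbabilityMeasure P]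
    (hY : ∀ j, Measurable (Y j)) (hlaw : ∀ j, P.map (Y j) = ν) (hind : iIndepFun Y P)
    (hf : Measurable f) (hK : 0 ≤ K) (hfK : ∀ j ω, |f (Y j ω)| ≤ K) (hn : 0 < n) :
    ∫ ω, |∫ y, f y ∂ν - ∫ y, f y ∂empiricalMeasure (Y · ω) n| ∂P ≤ K / Real.sqrt n := by
  simp_rw [integral_empiricalMeasure]
  refine integral_abs_sub_average_le (fun j => (hf.comp (hY j)).aestronglyMeasurable)
    (fun i j hij => (hind.indepFun hij).comp hf hf) hK hfK (fun j => ?_) hn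
  rw [← hlaw j, integral_map (hY j).aemeasurable hf.aestronglyMeasurable]
  rfl

end IidSample

theorem mgf_map_eq_mgf_adjoint (μ : Measure (Euc d)) (C : Euc d →L[ℝ] Euc m) (z : Euc m) :
    Mgf (μ.map C) z = Mgf μ (ContinuousLinearMap.adjoint C z) := by
  rw [Mgf, integral_map C.continuous.aemeasurable (by fun_prop)]
  simp [Mgf, ContinuousLinearMap.adjoint_inner_left]

theorem empMgf_adjoint {Ω : Type*} (X : ℕ → Ω → Euc d) (C : Euc d →L[ℝ] Euc m) (n : ℕ) (ω : Ω)
    (z : Euc m) :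
    EmpMgf X n ω (ContinuousLinearMap.adjoint C z) = EmpMgf (fun j ω => C (X j ω)) n ω z := by
  simp [EmpMgf, ContinuousLinearMap.adjoint_inner_left]

theorem empMgf_eq_mgf_empiricalMeasure {Ω : Type*} (Y : ℕ → Ω → Euc m) (n : ℕ) (ω : Ω)
    (z : Euc m) : EmpMgf Y n ω z = Mgf (empiricalMeasure (Y · ω) n) z := by
  rw [Mgf, integral_empiricalMeasure, EmpMgf]

section Mgf

variable {μ : Measure (Euc m)} [IsFiniteMeasure μ] {R : ℝ}

theorem integral_inner_pow_eq_sum (hμ : ∀ᵐ y ∂μ, ‖y‖ ≤ R) (z : Euc m) (k : ℕ) :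
    ∫ y, ⟪z, y⟫ ^ k ∂μ = ∑ p : Fin k → Fin m, (∏ i, z (p i)) * ∫ y, ∏ i, y (p i) ∂μ := by
  simp_rw [inner_pow_eq_sum_prod, ← integral_const_mul]
  exact integral_finsetSum _ fun p _ =>
    (show Continuous fun y : Euc m => (∏ i, z (p i)) * ∏ i, y (p i) by fun_prop)
      |>.integrable_of_ae_norm_le hμ

theorem hasSum_mgf (hμ : ∀ᵐ y ∂μ, ‖y‖ ≤ R) (z : Euc m) :
    HasSum (fun k => ∫ y, ⟪z, y⟫ ^ k / k.factorial ∂μ) (Mgf μ z) := by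
  have hexp : ∀ y, Real.exp ⟪z, y⟫ = ∑' k, ⟪z, y⟫ ^ k / k.factorial := fun y => by
    rw [Real.exp_eq_exp_ℝ, NormedSpace.exp_eq_tsum_div]
  have hint : ∀ k, Integrable (fun y => ⟪z, y⟫ ^ k / k.factorial) μ := fun k =>
    (show Continuous fun y : Euc m => ⟪z, y⟫ ^ k / k.factorial by fun_prop)
      |>.integrable_of_ae_norm_le hμ
  have hbound : ∀ k, ∫ y, ‖⟪z, y⟫ ^ k / k.factorial‖ ∂μ ≤
      μ.real Set.univ * ((‖z‖ * R) ^ k / k.factorial) := fun k => by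
    refine (integral_mono_ae (hint k).norm
      (integrable_const ((‖z‖ * R) ^ k / k.factorial)) ?_).trans_eq (by simp)
    filter_upwards [hμ] with y hy
    rw [norm_div, norm_pow, Real.norm_natCast]
    gcongr
    exact (abs_real_inner_le_norm z y).trans (by gcongr)
  have hsum := hasSum_integral_of_summable_integral_norm hint
    (.of_nonneg_of_le (fun k => integral_nonneg fun _ => norm_nonneg _) hbound
      ((Real.summable_pow_div_factorial _).mul_left _))
  simpa only [Mgf, hexp] using hsum

theorem continuous_mgf (hμ : ∀ᵐ y ∂μ, ‖y‖ ≤ R) : Continuous (Mgf μ) := by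
  refine continuous_iff_continuousAt.2 fun z => continuousAt_of_dominated
    (bound := fun _ => Real.exp ((‖z‖ + 1) * R)) (.of_forall fun _ => by fun_prop) ?_
    (integrable_const _) (.of_forall fun _ => by fun_prop)
  filter_upwards [Metric.ball_mem_nhds z one_pos] with w hw
  filter_upwards [hμ] with y hy
  rw [Real.norm_eq_abs, abs_of_pos (Real.exp_pos _)]
  gcongr
  have : ‖w‖ ≤ ‖z‖ + 1 := by
    have := norm_le_norm_add_norm_sub' w z; rw [mem_ball_iff_norm] at hw; linarith
  exact (real_inner_le_norm w y).trans (mul_le_mul this hy (norm_nonneg _) (by positivity))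

end Mgf

def momentGap (k : ℕ) (μ ν : Measure (Euc m)) : ℝ :=
  ∑ p : Fin k → Fin m, |∫ y, ∏ i, y (p i) ∂μ - ∫ y, ∏ i, y (p i) ∂ν|

def momentDist (ρ : ℝ) (μ ν : Measure (Euc m)) : ℝ :=
  ∑' k, ρ ^ k / k.factorial * momentGap k μ ν

section MomentDist

variable {μ ν : Measure (Euc m)} [IsProbabilityMeasure μ] [IsProbabilityMeasure ν] {R ρ : ℝ}

theorem abs_integral_prod_apply_le (hμ : ∀ᵐ y ∂μ, ‖y‖ ≤ R) {k : ℕ}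
    (p : Fin k → Fin m) : |∫ y, ∏ i, y (p i) ∂μ| ≤ R ^ k := by
  simpa using norm_integral_le_of_norm_le_const (f := fun y : Euc m => ∏ i, y (p i))
    (hμ.mono fun y hy => abs_prod_apply_le_pow hy p)

theorem momentGap_le (hμ : ∀ᵐ y ∂μ, ‖y‖ ≤ R) (hν : ∀ᵐ y ∂ν, ‖y‖ ≤ R) (k : ℕ) :
    momentGap k μ ν ≤ 2 * (m * R) ^ k := by
  calc momentGap k μ ν ≤ ∑ _p : Fin k → Fin m, 2 * R ^ k := by
        refine Finset.sum_le_sum fun p _ => ?_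
        linarith [abs_sub (∫ y, ∏ i, y (p i) ∂μ) (∫ y, ∏ i, y (p i) ∂ν),
          abs_integral_prod_apply_le hμ p, abs_integral_prod_apply_le hν p]
    _ = 2 * (m * R) ^ k := by simp [Finset.card_univ, mul_pow]; ring

theorem summable_momentDist (hμ : ∀ᵐ y ∂μ, ‖y‖ ≤ R) (hν : ∀ᵐ y ∂ν, ‖y‖ ≤ R) (hρ : 0 ≤ ρ) :
    Summable fun k => ρ ^ k / k.factorial * momentGap k μ ν := by
  refine .of_nonneg_of_le (fun k => mul_nonneg (by positivity) ?_) (fun k => ?_)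
    ((Real.summable_pow_div_factorial (ρ * (m * R))).mul_left 2)
  · exact Finset.sum_nonneg fun p _ => abs_nonneg _
  · calc ρ ^ k / k.factorial * momentGap k μ ν ≤ ρ ^ k / k.factorial * (2 * (m * R) ^ k) := by
          gcongr; exact momentGap_le hμ hν k
      _ = 2 * ((ρ * (m * R)) ^ k / k.factorial) := by ring

theorem abs_mgf_sub_mgf_le_momentDist (hμ : ∀ᵐ y ∂μ, ‖y‖ ≤ R) (hν : ∀ᵐ y ∂ν, ‖y‖ ≤ R)
    {z : Euc m} (hz : ‖z‖ ≤ ρ) : |Mgf μ z - Mgf ν z| ≤ momentDist ρ μ ν := by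
  refine ((hasSum_mgf hμ z).sub (hasSum_mgf hν z)).norm_le_of_bounded
    (summable_momentDist hμ hν ((norm_nonneg z).trans hz)).hasSum fun k => ?_
  rw [integral_div, integral_div, ← sub_div, integral_inner_pow_eq_sum hμ,
    integral_inner_pow_eq_sum hν, ← Finset.sum_sub_distrib, Real.norm_eq_abs, abs_div,
    Nat.abs_cast, div_mul_eq_mul_div, momentGap, Finset.mul_sum]
  gcongr
  refine (Finset.abs_sum_le_sum_abs _ _).trans (Finset.sum_le_sum fun p _ => ?_)
  rw [← mul_sub, abs_mul]
  gcongr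
  exact abs_prod_apply_le_pow hz p

end MomentDist

section EmpiricalMgf

variable {Ω : Type*} [MeasurableSpace Ω] {P : Measure Ω} {ν : Measure (Euc m)}
  {Y : ℕ → Ω → Euc m} {R ρ : ℝ} {n : ℕ}

theorem measurable_sSup_abs_mgf_sub_empMgf [IsFiniteMeasure ν] (hν : ∀ᵐ y ∂ν, ‖y‖ ≤ R)
    (hY : ∀ j, Measurable (Y j)) :
    Measurable fun ω => sSup ((fun z => |Mgf ν z - EmpMgf Y n ω z|) '' closedBall 0 ρ) :=
  measurable_sSup_image_of_continuousOn
    (fun ω => ((continuous_mgf hν).sub (by unfold EmpMgf; fun_prop)).abs.continuousOn)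
    (fun z => by unfold EmpMgf; fun_prop)

theorem integrable_momentGap_empiricalMeasure [IsFiniteMeasure P] (hY : ∀ j, Measurable (Y j))
    (hYR : ∀ j ω, ‖Y j ω‖ ≤ R) (hn : 0 < n) (k : ℕ) :
    Integrable (fun ω => momentGap k ν (empiricalMeasure (Y · ω) n)) P :=
  integrable_finsetSum _ fun p _ => integrable_abs_integral_sub_integral_empiricalMeasure hY
    (by fun_prop) (fun j ω => abs_prod_apply_le_pow (hYR j ω) p) hn

theorem integral_momentGap_empiricalMeasure_le [IsProbabilityMeasure P]
    (hY : ∀ j, Measurable (Y j)) (hlaw : ∀ j, P.map (Y j) = ν) (hind : iIndepFun Y P)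
    (hYR : ∀ j ω, ‖Y j ω‖ ≤ R) (hn : 0 < n) (k : ℕ) :
    ∫ ω, momentGap k ν (empiricalMeasure (Y · ω) n) ∂P ≤ (m * R) ^ k / Real.sqrt n := by
  obtain ⟨ω₀⟩ := nonempty_of_isProbabilityMeasure P
  have hR : 0 ≤ R := (norm_nonneg _).trans (hYR 0 ω₀)
  calc ∫ ω, momentGap k ν (empiricalMeasure (Y · ω) n) ∂P
      ≤ ∑ _p : Fin k → Fin m, R ^ k / Real.sqrt n := by
        unfold momentGap
        rw [integral_finsetSum _ fun p _ => integrable_abs_integral_sub_integral_empiricalMeasure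
          hY (by fun_prop) (fun j ω => abs_prod_apply_le_pow (hYR j ω) p) hn]
        exact Finset.sum_le_sum fun p _ => integral_abs_integral_sub_integral_empiricalMeasure_le
          hY hlaw hind (by fun_prop) (pow_nonneg hR k)
          (fun j ω => abs_prod_apply_le_pow (hYR j ω) p) hn
    _ = (m * R) ^ k / Real.sqrt n := by simp [Finset.card_univ, mul_pow]; ring

theorem integral_sSup_abs_mgf_sub_empMgf_le [IsProbabilityMeasure P]
    (hY : ∀ j, Measurable (Y j)) (hlaw : ∀ j, P.map (Y j) = ν) (hind : iIndepFun Y P)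
    (hYR : ∀ j ω, ‖Y j ω‖ ≤ R) (hρ : 0 ≤ ρ) (hn : 0 < n) :
    ∫ ω, sSup ((fun z => |Mgf ν z - EmpMgf Y n ω z|) '' closedBall 0 ρ) ∂P ≤
      Real.exp (ρ * (m * R)) / Real.sqrt n := by
  have : IsProbabilityMeasure ν := hlaw 0 ▸ Measure.isProbabilityMeasure_map (hY 0).aemeasurable
  have hν := ae_norm_le_of_map_eq (hY 0).aemeasurable (hlaw 0) (hYR 0)
  have := fun ω => isProbabilityMeasure_empiricalMeasure (Y · ω) hn
  set g : ℕ → Ω → ℝ := fun k ω =>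
    ρ ^ k / k.factorial * momentGap k ν (empiricalMeasure (Y · ω) n)
  have hg0 : ∀ k ω, 0 ≤ g k ω := fun k ω =>
    mul_nonneg (by positivity) (Finset.sum_nonneg fun p _ => abs_nonneg _)
  have hg_mean : ∀ k, ∫ ω, g k ω ∂P ≤ (ρ * (m * R)) ^ k / k.factorial / Real.sqrt n :=
    fun k => by
      rw [integral_const_mul, mul_pow, mul_div_right_comm, mul_div_assoc]
      gcongr
      exact integral_momentGap_empiricalMeasure_le hY hlaw hind hYR hn k
  have hsum : Summable fun k => (ρ * (m * R)) ^ k / k.factorial / Real.sqrt n :=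
    (Real.summable_pow_div_factorial _).div_const _
  have hg_sum : Summable fun k => ∫ ω, g k ω ∂P :=
    .of_nonneg_of_le (fun k => integral_nonneg (hg0 k)) hg_mean hsum
  calc ∫ ω, sSup ((fun z => |Mgf ν z - EmpMgf Y n ω z|) '' closedBall 0 ρ) ∂P
      ≤ ∑' k, ∫ ω, g k ω ∂P := by
        refine integral_le_tsum_integral_of_le_tsum
          (measurable_sSup_abs_mgf_sub_empMgf hν hY).aestronglyMeasurable
          (fun ω => Real.sSup_nonneg (by rintro _ ⟨z, -, rfl⟩; exact abs_nonneg _)) hg0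
          (fun k => (integrable_momentGap_empiricalMeasure hY hYR hn k).const_mul _) hg_sum
          fun ω => Real.sSup_le ?_ (tsum_nonneg (hg0 · ω))
        rintro _ ⟨z, hz, rfl⟩
        dsimp only
        rw [empMgf_eq_mgf_empiricalMeasure]
        exact abs_mgf_sub_mgf_le_momentDist hν (ae_empiricalMeasure _ _ (hYR · ω))
          (mem_closedBall_zero_iff.1 hz)
    _ ≤ ∑' k, (ρ * (m * R)) ^ k / k.factorial / Real.sqrt n := by
        exact hg_sum.tsum_le_tsum hg_mean hsum
    _ = Real.exp (ρ * (m * R)) / Real.sqrt n := by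
        rw [tsum_div_const, Real.exp_eq_exp_ℝ, NormedSpace.exp_eq_tsum_div]

end EmpiricalMgf

theorem expected_mgf_sup_distance_bound_general
    (d m : ℕ)
    (Xs : Set (Euc d)) (hXc : IsCompact Xs)
    (C : Euc d →L[ℝ] Euc m) :
    ∀ ρ : ℝ, 0 < ρ →
    ∃ D : ℝ, 0 < D ∧
      ∀ (Ω : Type) (mΩ : MeasurableSpace Ω) (P : Measure Ω),
        IsProbabilityMeasure P →
      ∀ μ : Measure (Euc d), IsProbabilityMeasure μ → (∀ᵐ x ∂μ, x ∈ Xs) →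
      ∀ X : ℕ → Ω → Euc d, (∀ i, Measurable (X i)) →
        (∀ i, Measure.map (X i) P = μ) →
        iIndepFun X P →
        (∀ i ω, X i ω ∈ Xs) →
      ∀ n : ℕ, 0 < n →
        (Measurable (fun ω =>
            sSup ((fun z => |Mgf μ (ContinuousLinearMap.adjoint C z) -
                EmpMgf X n ω (ContinuousLinearMap.adjoint C z)|) ''
              Metric.closedBall (0 : Euc m) ρ)) ∧
          ∫ ω, sSup ((fun z => |Mgf μ (ContinuousLinearMap.adjoint C z) -
                EmpMgf X n ω (ContinuousLinearMap.adjoint C z)|) ''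
              Metric.closedBall (0 : Euc m) ρ) ∂P ≤ D / Real.sqrt n) := by
  intro ρ hρ
  obtain ⟨B, hB⟩ := hXc.isBounded.exists_norm_le
  refine ⟨Real.exp (ρ * (m * (‖C‖ * B))), Real.exp_pos _, ?_⟩
  intro Ω _ P _ μ _ _ X hX hlaw hind hXs n hn
  set Y : ℕ → Ω → Euc m := fun j ω => C (X j ω)
  have hY : ∀ j, Measurable (Y j) := fun j => C.continuous.measurable.comp (hX j)
  have hYlaw : ∀ j, P.map (Y j) = μ.map C := fun j => by
    rw [← hlaw j, Measure.map_map C.continuous.measurable (hX j)]; rfl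
  have hYB : ∀ j ω, ‖Y j ω‖ ≤ ‖C‖ * B := fun j ω => C.le_opNorm_of_le (hB _ (hXs j ω))
  simp_rw [← mgf_map_eq_mgf_adjoint, empMgf_adjoint]
  exact ⟨measurable_sSup_abs_mgf_sub_empMgf
      (ae_norm_le_of_map_eq (hY 0).aemeasurable (hYlaw 0) (hYB 0)) hY,
    integral_sSup_abs_mgf_sub_empMgf_le hY hYlaw (hind.comp _ fun _ => C.continuous.measurable)
      hYB hρ.le hn⟩

/-- Donsker-type bound in expectation for the sup-distance of the empirical
and true moment generating functions on `B_ρ`, with constant independent of `n` and `μ`. -/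
theorem expected_mgf_sup_distance_bound
    (d m : ℕ) (hd : 0 < d) (hm : 0 < m)
    (Xs : Set (Euc d)) (hXc : IsCompact Xs) (hXne : Xs.Nonempty)
    (C : Euc d →L[ℝ] Euc m) :
    ∀ ρ : ℝ, 0 < ρ →
    ∃ D : ℝ, 0 < D ∧
      ∀ (Ω : Type) (mΩ : MeasurableSpace Ω) (P : Measure Ω),
        IsProbabilityMeasure P →
      ∀ μ : Measure (Euc d), IsProbabilityMeasure μ → (∀ᵐ x ∂μ, x ∈ Xs) →
      ∀ X : ℕ → Ω → Euc d, (∀ i, Measurable (X i)) →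
        (∀ i, Measure.map (X i) P = μ) →
        iIndepFun X P →
        (∀ i ω, X i ω ∈ Xs) →
      ∀ n : ℕ, 0 < n →
        (Measurable (fun ω =>
            sSup ((fun z => |Mgf μ (ContinuousLinearMap.adjoint C z) -
                EmpMgf X n ω (ContinuousLinearMap.adjoint C z)|) ''
              Metric.closedBall (0 : Euc m) ρ)) ∧
          ∫ ω, sSup ((fun z => |Mgf μ (ContinuousLinearMap.adjoint C z) -
                EmpMgf X n ω (ContinuousLinearMap.adjoint C z)|) ''
              Metric.closedBall (0 : Euc m) ρ) ∂P ≤ D / Real.sqrt n) :=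
  expected_mgf_sup_distance_bound_general d m Xs hXc C
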